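/- Let B be a ℤ-graded bialgebra over a field k satisfying the twisting conditions, and let (τ, μ) be a twisting pair of B. Set α_i := ε∘τ_i for i ∈ ℤ. Then: {α_i}_{i∈ℤ} is a system of twisting functionals on B, each α_i is convolution invertible with inverse α_i^{-1} = ε∘μ_i; τ_i = Ξ^r[α_i] and μ_i = Ξ^l[α_i^{-1}] for all i; and for all i, j ∈ ℤ one has (P3) τ_i∘μ_j = μ_j∘τ_i and (P4) (τ_i ⊗ μ_i)∘Δ = Δ. -/

import Mathlib

open TensorProduct

/-- Convolution product of linear functionals on a coalgebra. -/
noncomputable def conv {k B : Type*} [CommSemiring k] [AddCommMonoid B] [Module k B]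
    [Coalgebra k B] (f g : B →ₗ[k] k) : B →ₗ[k] k :=
  LinearMap.mul' k k ∘ₗ TensorProduct.map f g ∘ₗ Coalgebra.comul

/-- The right winding map `Ξ^r[π](b) = Σ b_1 π(b_2)`. -/
noncomputable def windR {k B : Type*} [CommSemiring k] [AddCommMonoid B] [Module k B]
    [Coalgebra k B] (π : B →ₗ[k] k) : B →ₗ[k] B :=
  (TensorProduct.rid k B).toLinearMap ∘ₗ TensorProduct.map LinearMap.id π ∘ₗ Coalgebra.comul

/-- The left winding map `Ξ^l[π](b) = Σ π(b_1) b_2`. -/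
noncomputable def windL {k B : Type*} [CommSemiring k] [AddCommMonoid B] [Module k B]
    [Coalgebra k B] (π : B →ₗ[k] k) : B →ₗ[k] B :=
  (TensorProduct.lid k B).toLinearMap ∘ₗ TensorProduct.map π LinearMap.id ∘ₗ Coalgebra.comul

/-- A system of twisting functionals on a ℤ-graded bialgebra `B`. -/
def IsTwistingFunctionalSystem {k B : Type*} [CommSemiring k] [Semiring B] [Bialgebra k B]
    (𝒜 : ℤ → Submodule k B) (α : ℤ → (B →ₗ[k] k)) : Prop :=
  (∀ i : ℤ, ∃ αinv : B →ₗ[k] k, conv (α i) αinv = Coalgebra.counit ∧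
    conv αinv (α i) = Coalgebra.counit) ∧
  (∀ i : ℤ, α i 1 = 1) ∧
  (α 0 = Coalgebra.counit) ∧
  (∀ (i j : ℤ), ∀ a ∈ 𝒜 j, ∀ b : B,
    conv ((α i) ∘ₗ LinearMap.mulLeft k a) (α j) b = α i a * α (i + j) b)

/-- A twisting system of a ℤ-graded algebra. -/
def IsTwistingSystem {k A : Type*} [CommSemiring k] [Semiring A] [Algebra k A]
    (𝒜 : ℤ → Submodule k A) (τ : ℤ → (A →ₗ[k] A)) : Prop :=
  (∀ i : ℤ, Function.Bijective (τ i)) ∧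
  (∀ (i n : ℤ), ∀ a ∈ 𝒜 n, τ i a ∈ 𝒜 n) ∧
  (τ 0 = LinearMap.id) ∧
  (∀ i : ℤ, τ i 1 = 1) ∧
  (∀ (i j : ℤ), ∀ a ∈ 𝒜 j, ∀ b : A, τ i (a * τ j b) = τ i a * τ (i + j) b)

/-! By P1 and the counit axiom, `τ i` is the right winding map of `α i = ε ∘ τ i` and
`μ i` the left winding map of `β i = ε ∘ μ i`. By coassociativity, composites of winding maps
on the same side are winding maps of convolution products, so P2 says `β i * α i = ε`; hence
`Ξ^r[β i]` is a left inverse of the surjection `τ i`, thus also a right inverse, which gives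
`α i * β i = ε`. Left and right winding maps always commute (P3), and
`(Ξ^r[α] ⊗ Ξ^l[β]) ∘ Δ = (id ⊗ Ξ^l[α * β]) ∘ Δ` gives P4. -/

open Coalgebra LinearMap

section Winding

variable {k B : Type*} [CommSemiring k] [AddCommMonoid B] [Module k B] [Coalgebra k B]

theorem windR_counit : windR (counit : B →ₗ[k] k) = LinearMap.id := by
  rw [windR, ← lTensor_def, lTensor_counit_comp_comul]
  ext
  simp

theorem windL_counit : windL (counit : B →ₗ[k] k) = LinearMap.id := by
  rw [windL, ← rTensor_def, rTensor_counit_comp_comul]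
  ext
  simp

theorem comp_windR (f g : B →ₗ[k] k) : f ∘ₗ windR g = conv f g := by
  have h : f ∘ₗ (TensorProduct.rid k B).toLinearMap ∘ₗ map LinearMap.id g =
      mul' k k ∘ₗ map f g := by
    ext
    simp [mul_comm]
  rw [windR, conv, ← comp_assoc (h := mul' k k), ← h]
  simp only [comp_assoc]

theorem comp_windL (f g : B →ₗ[k] k) : g ∘ₗ windL f = conv f g := by
  have h : g ∘ₗ (TensorProduct.lid k B).toLinearMap ∘ₗ map f LinearMap.id =
      mul' k k ∘ₗ map f g := by
    ext
    simp
  rw [windL, conv, ← comp_assoc (h := mul' k k), ← h]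
  simp only [comp_assoc]

theorem counit_comp_windR (π : B →ₗ[k] k) : counit ∘ₗ windR π = π := by
  have h : (counit ∘ₗ (TensorProduct.rid k B).toLinearMap) ∘ₗ lTensor B π =
      π ∘ₗ (TensorProduct.lid k B).toLinearMap ∘ₗ rTensor B counit := by
    ext
    simp [mul_comm]
  rw [windR, ← lTensor_def, ← comp_assoc, ← comp_assoc, h, comp_assoc, comp_assoc,
    rTensor_counit_comp_comul]
  ext
  simp

theorem windR_comp_of_comul_comp {f : B →ₗ[k] B}
    (h : comul ∘ₗ f = map LinearMap.id f ∘ₗ comul (R := k)) (π : B →ₗ[k] k) :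
    windR (π ∘ₗ f) = windR π ∘ₗ f := by
  rw [← lTensor_def] at h
  simp only [windR, ← lTensor_def, lTensor_comp, comp_assoc, h]

theorem windL_comp_of_comul_comp {f : B →ₗ[k] B}
    (h : comul ∘ₗ f = map f LinearMap.id ∘ₗ comul (R := k)) (π : B →ₗ[k] k) :
    windL (π ∘ₗ f) = windL π ∘ₗ f := by
  rw [← rTensor_def] at h
  simp only [windL, ← rTensor_def, rTensor_comp, comp_assoc, h]

theorem eq_windR_counit_comp {f : B →ₗ[k] B}
    (h : comul ∘ₗ f = map LinearMap.id f ∘ₗ comul (R := k)) :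
    f = windR (counit ∘ₗ f) := by
  rw [windR_comp_of_comul_comp h, windR_counit, LinearMap.id_comp]

theorem eq_windL_counit_comp {f : B →ₗ[k] B}
    (h : comul ∘ₗ f = map f LinearMap.id ∘ₗ comul (R := k)) :
    f = windL (counit ∘ₗ f) := by
  rw [windL_comp_of_comul_comp h, windL_counit, LinearMap.id_comp]

theorem comul_comp_windR (π : B →ₗ[k] k) :
    comul ∘ₗ windR π = map LinearMap.id (windR π) ∘ₗ comul (R := k) := by
  calc comul ∘ₗ windR π
      = ((TensorProduct.rid k (B ⊗[k] B)).toLinearMap ∘ₗ lTensor _ π) ∘ₗ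
          rTensor B comul ∘ₗ comul := by
        rw [windR]
        simp only [← comp_assoc]
        congr 1
        ext
        simp
    _ = (lTensor B ((TensorProduct.rid k B).toLinearMap ∘ₗ lTensor B π) ∘ₗ
          (TensorProduct.assoc k B B B).toLinearMap) ∘ₗ rTensor B comul ∘ₗ comul := by
        congr 1
        ext
        simp
    _ = map LinearMap.id (windR π) ∘ₗ comul := by
        rw [comp_assoc, coassoc, ← comp_assoc, ← lTensor_comp, windR, lTensor_def]
        rfl

theorem comul_comp_windL (π : B →ₗ[k] k) :
    comul ∘ₗ windL π = map (windL π) LinearMap.id ∘ₗ comul (R := k) := by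
  calc comul ∘ₗ windL π
      = ((TensorProduct.lid k (B ⊗[k] B)).toLinearMap ∘ₗ rTensor _ π) ∘ₗ
          lTensor B comul ∘ₗ comul := by
        rw [windL]
        simp only [← comp_assoc]
        congr 1
        ext
        simp
    _ = (rTensor B ((TensorProduct.lid k B).toLinearMap ∘ₗ rTensor B π) ∘ₗ
          (TensorProduct.assoc k B B B).symm.toLinearMap) ∘ₗ lTensor B comul ∘ₗ comul := by
        congr 1
        ext
        simp [TensorProduct.smul_tmul']
    _ = map (windL π) LinearMap.id ∘ₗ comul := by
        rw [comp_assoc, coassoc_symm, ← comp_assoc, ← rTensor_comp, windL, rTensor_def]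
        rfl

theorem windR_comp_windR (π σ : B →ₗ[k] k) :
    windR π ∘ₗ windR σ = windR (conv π σ) := by
  rw [← windR_comp_of_comul_comp (comul_comp_windR σ), comp_windR]

theorem windL_comp_windL (π σ : B →ₗ[k] k) :
    windL σ ∘ₗ windL π = windL (conv π σ) := by
  rw [← windL_comp_of_comul_comp (comul_comp_windL π), comp_windL]

theorem windR_comp_windL_comm (π σ : B →ₗ[k] k) :
    windR π ∘ₗ windL σ = windL σ ∘ₗ windR π := by
  have h : ((TensorProduct.rid k B).toLinearMap ∘ₗ lTensor B π) ∘ₗ rTensor B (windL σ) =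
      windL σ ∘ₗ (TensorProduct.rid k B).toLinearMap ∘ₗ lTensor B π := by
    ext
    simp
  rw [windR, ← lTensor_def, comp_assoc, comp_assoc, comul_comp_windL, ← rTensor_def,
    ← comp_assoc, ← comp_assoc, h]
  simp only [comp_assoc]

theorem conv_eq_counit_of_surjective {π σ : B →ₗ[k] k}
    (hπ : Function.Surjective (windR π)) (h : conv σ π = counit) : conv π σ = counit := by
  have hleft : Function.LeftInverse (windR σ) (windR π) := fun b => by
    rw [← LinearMap.comp_apply, windR_comp_windR, h, windR_counit, LinearMap.id_apply]
  have hright : windR π ∘ₗ windR σ = LinearMap.id :=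
    LinearMap.ext (hleft.rightInverse_of_surjective hπ)
  rw [← comp_windR, ← counit_comp_windR π, comp_assoc, hright, comp_id]

theorem rTensor_windR_comp_comul (π : B →ₗ[k] k) :
    rTensor B (windR π) ∘ₗ comul = lTensor B (windL π) ∘ₗ comul (R := k) := by
  calc rTensor B (windR π) ∘ₗ comul
      = (rTensor B ((TensorProduct.rid k B).toLinearMap ∘ₗ lTensor B π) ∘ₗ
          (TensorProduct.assoc k B B B).symm.toLinearMap) ∘ₗ lTensor B comul ∘ₗ comul := by
        rw [comp_assoc, coassoc_symm, ← comp_assoc, ← rTensor_comp, windR, lTensor_def]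
        rfl
    _ = lTensor B ((TensorProduct.lid k B).toLinearMap ∘ₗ rTensor B π) ∘ₗ
          lTensor B comul ∘ₗ comul := by
        congr 1
        ext
        simp [TensorProduct.smul_tmul']
    _ = lTensor B (windL π) ∘ₗ comul := by
        rw [← comp_assoc, ← lTensor_comp, windL, rTensor_def]
        rfl

theorem map_windR_windL_comp_comul (π σ : B →ₗ[k] k) :
    map (windR π) (windL σ) ∘ₗ comul =
      lTensor B (windL (conv π σ)) ∘ₗ comul (R := k) := by
  rw [← lTensor_comp_rTensor, comp_assoc, rTensor_windR_comp_comul, ← comp_assoc,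
    ← lTensor_comp, windL_comp_windL]

end Winding

theorem isTwistingFunctionalSystem_counit_comp {k B : Type*} [CommSemiring k] [Semiring B]
    [Bialgebra k B] {𝒜 : ℤ → Submodule k B} {τ : ℤ → (B →ₗ[k] B)}
    (hτ : IsTwistingSystem 𝒜 τ)
    (hcomul : ∀ i, comul ∘ₗ τ i = map LinearMap.id (τ i) ∘ₗ comul (R := k))
    (hinv : ∀ i, ∃ β : B →ₗ[k] k, conv (counit ∘ₗ τ i) β = counit ∧
      conv β (counit ∘ₗ τ i) = counit) :
    IsTwistingFunctionalSystem 𝒜 (fun i => counit ∘ₗ τ i) := by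
  obtain ⟨-, -, hτ₀, hτ₁, hτmul⟩ := hτ
  refine ⟨hinv, fun i => ?_, by simp only [hτ₀, comp_id], fun i j a ha b => ?_⟩
  · simp [hτ₁ i]
  · rw [← comp_windR, ← eq_windR_counit_comp (hcomul j)]
    simp [hτmul i j a ha b]

theorem statement10 {k B : Type*} [Field k] [Ring B] [Bialgebra k B]
    (𝒜 : ℤ → Submodule k B)
    (τ μ : ℤ → (B →ₗ[k] B))
    (hτ : IsTwistingSystem 𝒜 τ)
    (hP1τ : ∀ i : ℤ, Coalgebra.comul (R := k) ∘ₗ τ i =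
      TensorProduct.map LinearMap.id (τ i) ∘ₗ Coalgebra.comul)
    (hP1μ : ∀ i : ℤ, Coalgebra.comul (R := k) ∘ₗ μ i =
      TensorProduct.map (μ i) LinearMap.id ∘ₗ Coalgebra.comul)
    (hP2 : ∀ i : ℤ, Coalgebra.counit (R := k) ∘ₗ (τ i ∘ₗ μ i) = Coalgebra.counit) :
    IsTwistingFunctionalSystem 𝒜 (fun i => Coalgebra.counit ∘ₗ τ i) ∧
    (∀ i : ℤ,
      conv (Coalgebra.counit ∘ₗ τ i) (Coalgebra.counit ∘ₗ μ i) = Coalgebra.counit ∧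
      conv (Coalgebra.counit ∘ₗ μ i) (Coalgebra.counit ∘ₗ τ i) = Coalgebra.counit) ∧
    (∀ i : ℤ, τ i = windR (Coalgebra.counit ∘ₗ τ i)) ∧
    (∀ i : ℤ, μ i = windL (Coalgebra.counit ∘ₗ μ i)) ∧
    (∀ i j : ℤ, τ i ∘ₗ μ j = μ j ∘ₗ τ i) ∧
    (∀ i : ℤ, TensorProduct.map (τ i) (μ i) ∘ₗ Coalgebra.comul = Coalgebra.comul (R := k)) := by
  have hτw i : τ i = windR (counit ∘ₗ τ i) := eq_windR_counit_comp (hP1τ i)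
  have hμw i : μ i = windL (counit ∘ₗ μ i) := eq_windL_counit_comp (hP1μ i)
  have hβα i : conv (counit ∘ₗ μ i) (counit ∘ₗ τ i) = counit := by
    rw [← comp_windL, ← hμw, comp_assoc, hP2]
  have hαβ i : conv (counit ∘ₗ τ i) (counit ∘ₗ μ i) = counit :=
    conv_eq_counit_of_surjective (hτw i ▸ (hτ.1 i).2) (hβα i)
  refine ⟨isTwistingFunctionalSystem_counit_comp hτ hP1τ fun i => ⟨_, hαβ i, hβα i⟩,
    fun i => ⟨hαβ i, hβα i⟩, hτw, hμw, fun i j => ?_, fun i => ?_⟩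
  · rw [hτw i, hμw j]
    exact windR_comp_windL_comm _ _
  · rw [hτw i, hμw i, map_windR_windL_comp_comul, hαβ i, windL_counit, lTensor_id, id_comp]
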